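/- For all n ≥ 1: ∑_{m,k≥0, 1≤2k-1≤m≤n} (-1)^m q^{(m-k)^2+k^2+m-k} · [m choose 2k-1]_q · e_{m,n-m}(q) = (-1)^n q^{n^2}, where e_{m,j}(q) is the generating function for partitions into exactly j parts, all even and at most 2m (with e_{m,0}=1 and e_{0,j}=0 for j>0). -/

import Mathlib

/-!
Let `D_m = ∑_k q^{(m-k)^2+k^2+m-k} [m, 2k-1]_q`, the odd-indexed part `P_m` of
`∑_r q^{m(m-r)+r(r+1)/2} [m, r]_q`. By the `q`-Pascal rule, `P_m` and the even-indexed part `Q_m`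
satisfy `P_{m+1} = q^{m+1} Q_m + q^{2m+1} P_m` and the same recursion with `P` and `Q` swapped;
as `P_1 = Q_1 = q` they agree for `m ≥ 1`, so `D_1 = q` and `D_{m+1} = q^{m+1} (1 + q^m) D_m`.

Sorting partitions by whether they contain the largest allowed part gives
`e_{m+1,j+1} = e_{m,j+1} + q^{2m+2} e_{m+1,j}`, and by induction this implies
`e_{m+1,j+1} = q^2 e_{m+1,j} + q^{2j+2} e_{m,j+1}`. With these two recurrences the partial sums of
`∑_m (-1)^m D_m (e_{m,n+1-m} + q^{2n+1} e_{m,n-m})` telescope, the one up to `r` being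
`(-1)^r D_r (q^{r+1} + q^{2n+1}) e_{r,n-r}`. At `r = n` this says that the left-hand side `S_n`
satisfies `S_{n+1} = -q^{2n+1} S_n`, and `S_1 = -q`.
-/


open PowerSeries Finset

/-- The q-Pochhammer symbol `(a; q)_n = ∏_{j=0}^{n-1} (1 - a q^j)` in `ℤ[[q]]`. -/
noncomputable def qPoch (a : PowerSeries ℤ) (n : ℕ) : PowerSeries ℤ :=
  ∏ j ∈ Finset.range n, (1 - a * PowerSeries.X ^ j)

/-- The Gaussian binomial coefficient `[m choose r]_q`. -/
noncomputable def gaussBinom (m r : ℕ) : PowerSeries ℤ :=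
  if r ≤ m then
    qPoch PowerSeries.X m *
      Ring.inverse (qPoch PowerSeries.X r * qPoch PowerSeries.X (m - r))
  else 0

/-- Generating function `e_{m,j}` for partitions with exactly `j` parts, all parts even
and at most `2m` (so `e_{m,0} = 1` and `e_{0,j} = 0` for `j > 0`). -/
noncomputable def evenGF (m j : ℕ) : PowerSeries ℤ :=
  PowerSeries.mk fun s =>
    (Nat.card {p : Nat.Partition s //
      p.parts.card = j ∧ ∀ x ∈ p.parts, Even x ∧ x ≤ 2 * m} : ℤ)

theorem qPoch_zero (a : PowerSeries ℤ) : qPoch a 0 = 1 := Finset.prod_range_zero _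

theorem qPoch_X_succ (n : ℕ) :
    qPoch (X : PowerSeries ℤ) (n + 1) = qPoch X n * (1 - X ^ (n + 1)) := by
  rw [qPoch, Finset.prod_range_succ, ← pow_succ']
  rfl

theorem isUnit_qPoch_X (n : ℕ) : IsUnit (qPoch (X : PowerSeries ℤ) n) := by
  simp [isUnit_iff_constantCoeff, qPoch]

theorem gaussBinom_add_left_mul_qPoch (r s : ℕ) :
    gaussBinom (r + s) r * (qPoch X r * qPoch X s) = qPoch X (r + s) := by
  rw [gaussBinom, if_pos (Nat.le_add_right r s), Nat.add_sub_cancel_left, mul_assoc,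
    Ring.inverse_mul_cancel _ ((isUnit_qPoch_X r).mul (isUnit_qPoch_X s)), mul_one]

theorem gaussBinom_of_lt {m r : ℕ} (h : m < r) : gaussBinom m r = 0 := by
  rw [gaussBinom, if_neg h.not_ge]

theorem gaussBinom_zero_right (m : ℕ) : gaussBinom m 0 = 1 :=
  (isUnit_qPoch_X m).mul_right_cancel <| by
    simpa [qPoch_zero] using gaussBinom_add_left_mul_qPoch 0 m

theorem gaussBinom_self (m : ℕ) : gaussBinom m m = 1 :=
  (isUnit_qPoch_X m).mul_right_cancel <| by
    simpa [qPoch_zero] using gaussBinom_add_left_mul_qPoch m 0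

theorem gaussBinom_succ_succ (m r : ℕ) :
    gaussBinom (m + 1) (r + 1) = gaussBinom m r + X ^ (r + 1) * gaussBinom m (r + 1) := by
  rcases lt_trichotomy r m with hrm | rfl | hmr
  · obtain ⟨t, rfl⟩ : ∃ t, m = r + 1 + t := ⟨m - r - 1, by omega⟩
    have h₁ := gaussBinom_add_left_mul_qPoch (r + 1) (t + 1)
    have h₂ := gaussBinom_add_left_mul_qPoch r (t + 1)
    have h₃ := gaussBinom_add_left_mul_qPoch (r + 1) t
    rw [← add_assoc] at h₁
    rw [← add_assoc, add_right_comm] at h₂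
    refine ((isUnit_qPoch_X (r + 1)).mul (isUnit_qPoch_X (t + 1))).mul_right_cancel ?_
    rw [h₁]
    linear_combination qPoch_X_succ (r + 1 + t) - (1 - X ^ (r + 1)) * h₂
      - X ^ (r + 1) * (1 - X ^ (t + 1)) * h₃
      - gaussBinom (r + 1 + t) r * qPoch X (t + 1) * qPoch_X_succ r
      - X ^ (r + 1) * gaussBinom (r + 1 + t) (r + 1) * qPoch X (r + 1) * qPoch_X_succ t
  · rw [gaussBinom_self, gaussBinom_self, gaussBinom_of_lt (Nat.lt_succ_self r), mul_zero,
      add_zero]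
  · rw [gaussBinom_of_lt (by omega), gaussBinom_of_lt hmr, gaussBinom_of_lt (by omega), mul_zero,
      add_zero]

/-- The exponent `(m-k)^2 + k^2 + (m-k)` of the identity at `r = 2k - 1`, extended to all `r`. -/
def qExp (m r : ℕ) : ℕ := m * (m - r) + (r + 1).choose 2

theorem qExp_succ_succ {m r : ℕ} (h : r ≤ m) : qExp (m + 1) (r + 1) = qExp m r + (m + 1) := by
  obtain ⟨t, rfl⟩ := Nat.exists_eq_add_of_le h
  simp only [qExp, Nat.choose_succ_succ (r + 1), Nat.choose_one_right,
    Nat.add_sub_cancel_left, show r + t + 1 - (r + 1) = t by omega]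
  ring

theorem qExp_succ_succ_add {m r : ℕ} (h : r < m) :
    qExp (m + 1) (r + 1) + (r + 1) = qExp m (r + 1) + (2 * m + 1) := by
  obtain ⟨t, rfl⟩ := Nat.exists_eq_add_of_lt h
  simp only [qExp, Nat.choose_succ_succ (r + 1), Nat.choose_one_right,
    show r + t + 1 + 1 - (r + 1) = t + 1 by omega, show r + t + 1 - (r + 1) = t by omega]
  ring

theorem qExp_two_mul_add_one (j t : ℕ) :
    qExp (2 * j + 1 + t) (2 * j + 1) = (j + t) ^ 2 + (j + 1) ^ 2 + (j + t) := by
  have h : (2 * j + 2).choose 2 = (j + 1) * (2 * j + 1) := by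
    rw [Nat.choose_two_right, show 2 * j + 2 - 1 = 2 * j + 1 by omega,
      show (2 * j + 2) * (2 * j + 1) = 2 * ((j + 1) * (2 * j + 1)) by ring,
      Nat.mul_div_cancel_left _ two_pos]
  simp only [qExp, Nat.add_sub_cancel_left, h]
  ring

noncomputable def gaussTerm (m r : ℕ) : PowerSeries ℤ := X ^ qExp m r * gaussBinom m r

theorem gaussTerm_of_lt {m r : ℕ} (h : m < r) : gaussTerm m r = 0 := by
  rw [gaussTerm, gaussBinom_of_lt h, mul_zero]

theorem gaussTerm_zero_right (m : ℕ) : gaussTerm m 0 = X ^ (m ^ 2) := by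
  simp [gaussTerm, qExp, gaussBinom_zero_right, sq]

theorem gaussTerm_succ_succ (m r : ℕ) :
    gaussTerm (m + 1) (r + 1) =
      X ^ (m + 1) * gaussTerm m r + X ^ (2 * m + 1) * gaussTerm m (r + 1) := by
  have h₁ : X ^ qExp (m + 1) (r + 1) * gaussBinom m r = X ^ (m + 1) * gaussTerm m r := by
    rcases le_or_gt r m with h | h
    · rw [gaussTerm, qExp_succ_succ h, pow_add]
      ring
    · rw [gaussTerm_of_lt h, gaussBinom_of_lt h, mul_zero, mul_zero]
  have h₂ : X ^ qExp (m + 1) (r + 1) * (X ^ (r + 1) * gaussBinom m (r + 1)) =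
      X ^ (2 * m + 1) * gaussTerm m (r + 1) := by
    rcases lt_or_ge r m with h | h
    · rw [gaussTerm, ← mul_assoc, ← pow_add, qExp_succ_succ_add h, pow_add]
      ring
    · rw [gaussTerm_of_lt (by omega), gaussBinom_of_lt (by omega), mul_zero, mul_zero, mul_zero]
  rw [gaussTerm, gaussBinom_succ_succ, mul_add, h₁, h₂]

theorem sum_range_gaussTerm_eq {m M N : ℕ} (hMN : M ≤ N) {r : ℕ → ℕ}
    (hr : ∀ k ≥ M, m < r k) :
    ∑ k ∈ range N, gaussTerm m (r k) = ∑ k ∈ range M, gaussTerm m (r k) :=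
  eventually_constant_sum (fun k hk => gaussTerm_of_lt (hr k hk)) hMN

noncomputable def oddGaussSum (m : ℕ) : PowerSeries ℤ :=
  ∑ k ∈ range (m + 1), gaussTerm m (2 * k + 1)

noncomputable def evenGaussSum (m : ℕ) : PowerSeries ℤ :=
  ∑ k ∈ range (m + 1), gaussTerm m (2 * k)

theorem oddGaussSum_zero : oddGaussSum 0 = 0 := by
  simp [oddGaussSum, gaussTerm_of_lt]

theorem evenGaussSum_zero : evenGaussSum 0 = 1 := by
  simp [evenGaussSum, gaussTerm_zero_right]

theorem oddGaussSum_succ (m : ℕ) :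
    oddGaussSum (m + 1) = X ^ (m + 1) * evenGaussSum m + X ^ (2 * m + 1) * oddGaussSum m := by
  simp only [oddGaussSum, evenGaussSum, gaussTerm_succ_succ, sum_add_distrib, ← mul_sum]
  rw [sum_range_gaussTerm_eq (M := m + 1) (r := fun k => 2 * k) (by omega) (fun k _ => by omega),
    sum_range_gaussTerm_eq (M := m + 1) (r := fun k => 2 * k + 1) (by omega) (fun k _ => by omega)]

theorem evenGaussSum_succ (m : ℕ) :
    evenGaussSum (m + 1) = X ^ (m + 1) * oddGaussSum m + X ^ (2 * m + 1) * evenGaussSum m := by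
  have h₀ : gaussTerm (m + 1) 0 = X ^ (2 * m + 1) * gaussTerm m 0 := by
    rw [gaussTerm_zero_right, gaussTerm_zero_right, ← pow_add]
    ring
  calc evenGaussSum (m + 1)
      = ∑ k ∈ range (m + 1), gaussTerm (m + 1) (2 * k + 1 + 1) + gaussTerm (m + 1) 0 := by
        rw [evenGaussSum, sum_range_succ']
        rfl
    _ = X ^ (m + 1) * oddGaussSum m + X ^ (2 * m + 1) *
          (∑ k ∈ range (m + 1), gaussTerm m (2 * k + 1 + 1) + gaussTerm m 0) := by
        simp only [gaussTerm_succ_succ, sum_add_distrib, ← mul_sum, h₀, oddGaussSum]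
        ring
    _ = X ^ (m + 1) * oddGaussSum m + X ^ (2 * m + 1) * evenGaussSum m := by
        rw [evenGaussSum, ← sum_range_gaussTerm_eq (M := m + 1) (N := m + 2)
          (r := fun k => 2 * k) (by omega) (fun k _ => by omega),
          sum_range_succ' (fun k => gaussTerm m (2 * k)) (m + 1)]
        rfl

theorem oddGaussSum_one : oddGaussSum 1 = X := by
  rw [oddGaussSum_succ, oddGaussSum_zero, evenGaussSum_zero]
  ring

theorem oddGaussSum_eq_evenGaussSum {m : ℕ} (hm : 1 ≤ m) : oddGaussSum m = evenGaussSum m := by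
  induction m, hm using Nat.le_induction with
  | base =>
    rw [oddGaussSum_one, evenGaussSum_succ, oddGaussSum_zero, evenGaussSum_zero]
    ring
  | succ m _ ih => rw [oddGaussSum_succ, evenGaussSum_succ, ih]

theorem oddGaussSum_succ_of_pos {m : ℕ} (hm : 1 ≤ m) :
    oddGaussSum (m + 1) = X ^ (m + 1) * (1 + X ^ m) * oddGaussSum m := by
  rw [oddGaussSum_succ, ← oddGaussSum_eq_evenGaussSum hm]
  ring

noncomputable def restrictedPartitionGF (Q : ℕ → Prop) (j : ℕ) : PowerSeries ℤ :=
  PowerSeries.mk fun s =>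
    (Nat.card {p : Nat.Partition s // p.parts.card = j ∧ ∀ x ∈ p.parts, Q x} : ℤ)

theorem Nat.card_subtype_and_add_card_subtype_and_not {α : Type*} [Finite α] (p q : α → Prop) :
    Nat.card {x // p x ∧ q x} + Nat.card {x // p x ∧ ¬ q x} = Nat.card {x // p x} := by
  classical
  rw [← Nat.card_sum]
  exact Nat.card_congr <| (Equiv.sumCongr (Equiv.subtypeSubtypeEquivSubtypeInter p q).symm
    (Equiv.subtypeSubtypeEquivSubtypeInter p fun x => ¬ q x).symm).trans
    (.sumCompl fun x : {x // p x} => q x)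

theorem restrictedPartitionGF_zero (Q : ℕ → Prop) : restrictedPartitionGF Q 0 = 1 := by
  ext s
  rcases s with _ | s
  · simp [restrictedPartitionGF]
  · have : IsEmpty {p : Nat.Partition (s + 1) // p.parts.card = 0 ∧ ∀ x ∈ p.parts, Q x} :=
      ⟨fun ⟨p, hp, _⟩ => by simpa [Multiset.card_eq_zero.mp hp] using p.parts_sum⟩
    simp only [restrictedPartitionGF, coeff_mk, coeff_one, Nat.card_of_isEmpty]
    simp

theorem restrictedPartitionGF_succ_of_forall_eq_zero {Q : ℕ → Prop} (hQ : ∀ x, Q x → x = 0)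
    (j : ℕ) :
    restrictedPartitionGF Q (j + 1) = 0 := by
  ext s
  have : IsEmpty {p : Nat.Partition s // p.parts.card = j + 1 ∧ ∀ x ∈ p.parts, Q x} := by
    refine ⟨fun ⟨p, hp, hQp⟩ => ?_⟩
    obtain ⟨x, hx⟩ := Multiset.card_pos_iff_exists_mem.mp (by rw [hp]; exact j.succ_pos)
    exact (p.parts_pos hx).ne' (hQ x (hQp x hx))
  simp [restrictedPartitionGF]

theorem restrictedPartitionGF_succ {Q : ℕ → Prop} {a : ℕ} (ha : 1 ≤ a) (hQa : Q a)
    (j : ℕ) :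
    restrictedPartitionGF Q (j + 1) =
      restrictedPartitionGF (fun x => Q x ∧ x ≠ a) (j + 1) +
        X ^ a * restrictedPartitionGF Q j := by
  ext s
  simp only [restrictedPartitionGF, map_add, coeff_mk, coeff_X_pow_mul']
  rw [← Nat.card_subtype_and_add_card_subtype_and_not _ (fun p => a ∈ p.parts), add_comm]
  push_cast
  congr 1
  · refine congrArg _ (Nat.card_congr (Equiv.subtypeEquivRight fun p => ?_))
    constructor
    · rintro ⟨⟨hc, hQ⟩, hap⟩
      exact ⟨hc, fun x hx => ⟨hQ x hx, fun h => hap (h ▸ hx)⟩⟩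
    · rintro ⟨hc, hQ⟩
      exact ⟨⟨hc, fun x hx => (hQ x hx).1⟩, fun hap => (hQ a hap).2 rfl⟩
  split_ifs with has
  · refine congrArg _ (Nat.card_congr (((Equiv.subtypeEquivRight fun _ => and_comm).trans
      (Equiv.subtypeSubtypeEquivSubtypeInter _ _).symm).trans
      (Equiv.subtypeEquiv (Nat.Partition.partitionWithPartEquiv ha has) fun p => ?_)))
    rw [Nat.Partition.partitionWithPartEquiv_apply_parts]
    conv_lhs => rw [← Multiset.cons_erase p.2]
    simp [hQa]
  · have : IsEmpty {p : Nat.Partition s // (p.parts.card = j + 1 ∧ ∀ x ∈ p.parts, Q x) ∧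
        a ∈ p.parts} := ⟨fun ⟨p, _, hap⟩ => has (Nat.Partition.le_of_mem_parts hap)⟩
    simp

theorem evenGF_eq_restrictedPartitionGF (m j : ℕ) :
    evenGF m j = restrictedPartitionGF (fun x => Even x ∧ x ≤ 2 * m) j := rfl

theorem evenGF_zero_right (m : ℕ) : evenGF m 0 = 1 :=
  restrictedPartitionGF_zero _

theorem evenGF_zero_succ (j : ℕ) : evenGF 0 (j + 1) = 0 :=
  restrictedPartitionGF_succ_of_forall_eq_zero (fun _ h => Nat.le_zero.mp h.2) j

theorem evenGF_succ_succ (m j : ℕ) :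
    evenGF (m + 1) (j + 1) = evenGF m (j + 1) + X ^ (2 * (m + 1)) * evenGF (m + 1) j := by
  rw [evenGF_eq_restrictedPartitionGF, restrictedPartitionGF_succ (a := 2 * (m + 1)) (by omega)
    ⟨even_two_mul _, le_rfl⟩]
  congr 2
  ext x
  constructor
  · rintro ⟨⟨⟨c, rfl⟩, hx⟩, hne⟩
    exact ⟨⟨c, rfl⟩, by omega⟩
  · rintro ⟨⟨c, rfl⟩, hx⟩
    exact ⟨⟨⟨c, rfl⟩, by omega⟩, by omega⟩

theorem evenGF_succ_succ' (m j : ℕ) :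
    evenGF (m + 1) (j + 1) = X ^ 2 * evenGF (m + 1) j + X ^ (2 * (j + 1)) * evenGF m (j + 1) := by
  induction m generalizing j with
  | zero => simpa [evenGF_zero_succ] using evenGF_succ_succ 0 j
  | succ m ihm =>
    induction j with
    | zero =>
      have h₁ := evenGF_succ_succ (m + 1) 0
      have h₂ := evenGF_succ_succ m 0
      have h₃ := ihm 0
      simp only [evenGF_zero_right] at h₁ h₂ h₃ ⊢
      linear_combination h₁ + h₃ - X ^ 2 * h₂
    | succ j ihj =>
      linear_combination evenGF_succ_succ (m + 1) (j + 1) + ihm (j + 1) + X ^ (2 * (m + 2)) * ihj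
        - X ^ 2 * evenGF_succ_succ (m + 1) j - X ^ (2 * (j + 2)) * evenGF_succ_succ m (j + 1)

theorem oddGaussSum_mul_evenGF_sub (r j : ℕ) :
    oddGaussSum (r + 1) * (evenGF (r + 1) (j + 1) - X ^ (r + 2) * evenGF (r + 1) j) =
      X ^ (r + 1) * oddGaussSum r * (1 + X ^ (r + 2 * j + 2)) * evenGF r (j + 1) := by
  rcases r with _ | r
  · rw [oddGaussSum_one, oddGaussSum_zero]
    linear_combination X * evenGF_succ_succ' 0 j + X ^ (2 * j + 3) * evenGF_zero_succ j
  · rw [oddGaussSum_succ_of_pos (by omega)]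
    linear_combination X ^ (r + 2) * oddGaussSum (r + 1) *
      (evenGF_succ_succ (r + 1) j + X ^ (r + 1) * evenGF_succ_succ' (r + 1) j)

theorem sum_range_oddGaussSum_mul_evenGF_telescope {n r : ℕ} (hr : r ≤ n) :
    ∑ m ∈ range (r + 1), (-1) ^ m * oddGaussSum m *
        (evenGF m (n + 1 - m) + X ^ (2 * n + 1) * evenGF m (n - m)) =
      (-1) ^ r * oddGaussSum r * (X ^ (r + 1) + X ^ (2 * n + 1)) * evenGF r (n - r) := by
  induction r with
  | zero => simp [oddGaussSum_zero]
  | succ r ih =>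
    rw [sum_range_succ, ih (by omega)]
    obtain ⟨j, rfl⟩ : ∃ j, n = r + 1 + j := ⟨n - (r + 1), by omega⟩
    rw [show r + 1 + j + 1 - (r + 1) = j + 1 by omega, show r + 1 + j - (r + 1) = j by omega,
      show r + 1 + j - r = j + 1 by omega]
    linear_combination (-1) ^ (r + 1) * oddGaussSum_mul_evenGF_sub r j

theorem sum_range_oddGaussSum_mul_evenGF {n : ℕ} (hn : 1 ≤ n) :
    ∑ m ∈ range (n + 1), (-1) ^ m * oddGaussSum m * evenGF m (n - m) =
      (-1) ^ n * X ^ (n ^ 2) := by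
  induction n, hn using Nat.le_induction with
  | base => simp [sum_range_succ, oddGaussSum_zero, oddGaussSum_one, evenGF_zero_right]
  | succ n hn ih =>
    have h := sum_range_oddGaussSum_mul_evenGF_telescope (le_refl n)
    rw [Nat.sub_self, evenGF_zero_right, mul_one] at h
    have key : ∑ m ∈ range (n + 1), (-1) ^ m * oddGaussSum m * evenGF m (n + 1 - m) =
        (-1) ^ n * oddGaussSum n * (X ^ (n + 1) + X ^ (2 * n + 1)) -
          X ^ (2 * n + 1) * ((-1) ^ n * X ^ (n ^ 2)) := by
      rw [← ih, ← h, mul_sum, ← sum_sub_distrib]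
      exact sum_congr rfl fun m _ => by ring
    rw [sum_range_succ, key, Nat.sub_self, evenGF_zero_right, oddGaussSum_succ_of_pos hn]
    ring

theorem sum_range_ite_eq_oddGaussSum_mul_evenGF {m n : ℕ} (hmn : m ≤ n) :
    (∑ k ∈ range (n + 1),
      if 1 ≤ k ∧ 2 * k - 1 ≤ m then
        (-1 : PowerSeries ℤ) ^ m * X ^ ((m - k) ^ 2 + k ^ 2 + (m - k)) *
          gaussBinom m (2 * k - 1) * evenGF m (n - m)
      else 0) = (-1) ^ m * oddGaussSum m * evenGF m (n - m) := by
  have hterm : ∀ k, (if 1 ≤ k + 1 ∧ 2 * (k + 1) - 1 ≤ m then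
      (-1 : PowerSeries ℤ) ^ m * X ^ ((m - (k + 1)) ^ 2 + (k + 1) ^ 2 + (m - (k + 1))) *
        gaussBinom m (2 * (k + 1) - 1) * evenGF m (n - m)
      else 0) = (-1) ^ m * gaussTerm m (2 * k + 1) * evenGF m (n - m) := by
    intro k
    rw [show 2 * (k + 1) - 1 = 2 * k + 1 by omega]
    split_ifs with h
    · obtain ⟨t, rfl⟩ : ∃ t, m = 2 * k + 1 + t := ⟨m - (2 * k + 1), by omega⟩
      rw [gaussTerm, qExp_two_mul_add_one, show 2 * k + 1 + t - (k + 1) = k + t by omega]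
      ring
    · rw [gaussTerm_of_lt (by omega), mul_zero, zero_mul]
  rw [sum_range_succ', if_neg (by omega), add_zero, sum_congr rfl fun k _ => hterm k, ← sum_mul,
    ← mul_sum, sum_range_gaussTerm_eq hmn (M := m) (fun k _ => by omega), oddGaussSum,
    sum_range_gaussTerm_eq (M := m) (N := m + 1) (by omega) (fun k _ => by omega)]

/-- The coefficient of `a^n` (`n ≥ 1`) in Andrews' identity:
`∑_{1 ≤ 2k-1 ≤ m ≤ n} (-1)^m q^{(m-k)^2+k^2+m-k} [m choose 2k-1]_q e_{m,n-m}(q)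
  = (-1)^n q^{n^2}` in `ℤ[[q]]`. -/
theorem coeff_identity_q9 :
    ∀ n : ℕ, 1 ≤ n →
      (∑ m ∈ Finset.range (n + 1), ∑ k ∈ Finset.range (n + 1),
        if 1 ≤ k ∧ 2 * k - 1 ≤ m then
          (-1 : PowerSeries ℤ) ^ m * PowerSeries.X ^ ((m - k) ^ 2 + k ^ 2 + (m - k)) *
            gaussBinom m (2 * k - 1) * evenGF m (n - m)
        else 0) =
      (-1 : PowerSeries ℤ) ^ n * PowerSeries.X ^ (n ^ 2) := by
  intro n hn
  rw [sum_congr rfl fun m hm => sum_range_ite_eq_oddGaussSum_mul_evenGF (mem_range_succ_iff.mp hm)]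
  exact sum_range_oddGaussSum_mul_evenGF hn
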